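/- arXiv:2011.02111 — 2 statements merged into one kernel-verified Lean document; each statement's English description precedes it below -/
import Mathlib

section
/- Let γ>1. The equation λ(λ−1)(λ−2) − 12(2λ/(γ+1) + 2) = 0 has exactly one real solution λ₀, and this solution satisfies λ₀ > 4. -/
/-- For `0 < c < 12`, the cubic `x^3-3x^2+2x-c*x-24` is negative for `x ≤ 4`. -/
lemma stmt12_neg (c x : ℝ) (hc0 : 0 < c) (hc12 : c < 12) (hx : x ≤ 4) :
    x^3 - 3*x^2 + 2*x - c*x - 24 < 0 := by
  rcases le_or_gt 0 x with hx0 | hx0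
  · nlinarith [mul_nonneg (sub_nonneg.2 hx) (show (0:ℝ) ≤ x^2 + x + 6 by nlinarith [sq_nonneg x, mul_nonneg hx0 hx0]),
      mul_nonneg hc0.le hx0, mul_nonneg (sub_nonneg.2 hx) hc0.le,
      mul_nonneg hx0 (mul_nonneg hx0 hx0)]
  · nlinarith [sq_nonneg (3*x + 5),
      mul_neg_of_neg_of_pos hx0 (mul_pos_of_neg_of_neg hx0 hx0),
      mul_pos_of_neg_of_neg hx0 hx0, mul_pos (sub_pos.2 hc12) (neg_pos.2 hx0)]

/-- Strict monotonicity on `[4, ∞)`. -/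
lemma stmt12_mono (c a b : ℝ) (hc12 : c < 12) (ha : 4 ≤ a) (hab : a < b) :
    a^3 - 3*a^2 + 2*a - c*a - 24 < b^3 - 3*b^2 + 2*b - c*b - 24 := by
  have hb : 4 ≤ b := le_of_lt (lt_of_le_of_lt ha hab)
  nlinarith [mul_pos (sub_pos.2 hab)
    (show (0:ℝ) < a^2 + a*b + b^2 - 3*(a+b) + 2 - c by
      nlinarith [mul_nonneg (sub_nonneg.2 ha) (show (0:ℝ) ≤ a + 1 by linarith),
        mul_nonneg (sub_nonneg.2 hb) (show (0:ℝ) ≤ b + 1 by linarith),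
        mul_nonneg (sub_nonneg.2 ha) (sub_nonneg.2 hb)])]

/-- For `γ > 1`, the cubic equation `λ(λ−1)(λ−2) − 12(2λ/(γ+1)+2) = 0`
has exactly one real solution, and this solution is `> 4`. -/
theorem stmt12 (γ : ℝ) (hγ : 1 < γ) :
    ∃ lam₀ : ℝ,
      (lam₀ * (lam₀ - 1) * (lam₀ - 2) - 12 * (2 * lam₀ / (γ + 1) + 2) = 0 ∧ 4 < lam₀) ∧
      ∀ y : ℝ, y * (y - 1) * (y - 2) - 12 * (2 * y / (γ + 1) + 2) = 0 → y = lam₀ := by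
  have hγ2 : (2:ℝ) < γ + 1 := by linarith
  have hγ0 : (0:ℝ) < γ + 1 := by linarith
  set c : ℝ := 24 / (γ + 1) with hc
  have hc0 : 0 < c := div_pos (by norm_num) hγ0
  have hc12 : c < 12 := by
    rw [hc, div_lt_iff₀ hγ0]; linarith
  set g : ℝ → ℝ := fun x => x^3 - 3*x^2 + 2*x - c*x - 24 with hg
  have key : ∀ x : ℝ, x * (x - 1) * (x - 2) - 12 * (2 * x / (γ + 1) + 2) = g x := by
    intro x
    simp only [hg, hc]
    field_simp
    ring
  -- IVT on [4, 10]
  have hcont : ContinuousOn g (Set.Icc (4:ℝ) 10) := by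
    apply Continuous.continuousOn; fun_prop
  have h4 : g 4 < 0 := by
    simp only [hg]; nlinarith
  have h10 : 0 < g 10 := by
    simp only [hg]; nlinarith
  have hIVT := intermediate_value_Icc (by norm_num : (4:ℝ) ≤ 10) hcont
  have h0mem : (0:ℝ) ∈ Set.Icc (g 4) (g 10) := ⟨h4.le, h10.le⟩
  obtain ⟨lam₀, hlam_mem, hlam0⟩ := hIVT h0mem
  have hroot : ∀ z : ℝ, g z = 0 → 4 < z := by
    intro z hz
    by_contra h
    push_neg at h
    have := stmt12_neg c z hc0 hc12 h
    simp only [hg] at hz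
    linarith
  have hlam4 : 4 < lam₀ := hroot lam₀ hlam0
  refine ⟨lam₀, ⟨by rw [key]; exact hlam0, hlam4⟩, ?_⟩
  intro y hy
  rw [key] at hy
  have hy4 : 4 < y := hroot y hy
  rcases lt_trichotomy y lam₀ with h | h | h
  · exfalso
    have := stmt12_mono c y lam₀ hc12 hy4.le h
    simp only [hg] at hy hlam0
    linarith
  · exact h
  · exfalso
    have := stmt12_mono c lam₀ y hc12 hlam4.le h
    simp only [hg] at hy hlam0
    linarith
end

section
/- Let γ>1, R>0, T∞>0, set Γ²=((γ²+γ)RT∞+2)/12, let λ₀ be the unique real solution of λ₀(λ₀−1)(λ₀−2)−12(2λ₀/(γ+1)+2)=0, fix ε∈(0,λ₀) and Θ≥1. Then there exists δ>0 such that for all real S and B with 1 ≤ S ≤ Θ, B>0 and B^{−2} ≤ δ, setting b = B^{−2}Γ^{−2}, the quantities q₁, q₂, q₃, q₄, q₅ defined in the context satisfy: q₁>0, q₃>0, q₄>0, q₂² − 4q₁q₃ < 0, and q₅² − 4q₃q₄ < 0. -/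
private lemma absmul18 (c x y : ℝ) (hx : 0 ≤ x) (hxy : x ≤ y) : |c * x| ≤ |c| * y := by
  rw [abs_mul, abs_of_nonneg hx]
  exact mul_le_mul_of_nonneg_left hxy (abs_nonneg c)

set_option maxHeartbeats 1600000 in
/-- Positivity of the coefficients `q₁, q₃, q₄` and negativity of the two `2×2`
discriminants of the degenerate-case dissipation quadratic form, for
`1 ≤ S ≤ Θ` and `B⁻² ≤ δ`. -/
theorem stmt18 (γ R Tinf Γsq lam₀ ε Θ : ℝ)
    (hγ : 1 < γ) (hR : 0 < R) (hT : 0 < Tinf)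
    (hΓ : Γsq = ((γ ^ 2 + γ) * R * Tinf + 2) / 12)
    (hroot : lam₀ * (lam₀ - 1) * (lam₀ - 2) - 12 * (2 * lam₀ / (γ + 1) + 2) = 0)
    (hε : 0 < ε) (helam : ε < lam₀) (hΘ : 1 ≤ Θ) :
    ∃ δ > 0, ∀ S B : ℝ, 1 ≤ S → S ≤ Θ → 0 < B → 1 / B ^ 2 ≤ δ →
      ∀ b q₁ q₂ q₃ q₄ q₅ : ℝ,
        b = (1 / B ^ 2) * Γsq⁻¹ →
        q₁ = (ε / 2) * R * Tinf
          + b * (((1 - R * Tinf) * ε / 2) * S ^ 2 + (γ * R * Tinf - 1) * S ^ 3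
              - (Γsq / 2) * (ε * (ε - 1) * (ε - 2))) →
        q₂ = -(ε * R * Tinf)
          + b * (2 * ε * R * Tinf * S ^ 2 + 2 * (1 - γ * R * Tinf) * S ^ 3) →
        q₃ = (ε / 2) * γ * R * Tinf
          + b * (((1 - γ * R * Tinf) * ε / 2) * S ^ 2 + (3 * γ * R * Tinf + 1) * S ^ 3) →
        q₄ = ε * R / (2 * (γ - 1) * Tinf)
          + b * (-(ε * R / (2 * (γ - 1) * Tinf)) * S ^ 2
              + (γ * R / ((γ - 1) * Tinf)) * S ^ 3) →
        q₅ = -(ε * R) + 2 * ε * R * b * S ^ 2 →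
        0 < q₁ ∧ 0 < q₃ ∧ 0 < q₄ ∧
          q₂ ^ 2 - 4 * q₁ * q₃ < 0 ∧ q₅ ^ 2 - 4 * q₃ * q₄ < 0 := by
  have hA : 0 < R * Tinf := mul_pos hR hT
  have hg1 : 0 < γ - 1 := by linarith
  have hΓpos : 0 < Γsq := by
    rw [hΓ]
    have : 0 < (γ ^ 2 + γ) * R * Tinf := by
      apply mul_pos (mul_pos _ hR) hT; nlinarith
    linarith
  -- the perturbation-size constants
  obtain ⟨M1, hM1⟩ : ∃ x : ℝ, x = |(1 - R * Tinf) * ε / 2| + |γ * R * Tinf - 1|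
      + |Γsq / 2 * (ε * (ε - 1) * (ε - 2))| := ⟨_, rfl⟩
  obtain ⟨M2, hM2⟩ : ∃ x : ℝ, x = |2 * ε * R * Tinf| + |2 * (1 - γ * R * Tinf)| := ⟨_, rfl⟩
  obtain ⟨M3, hM3⟩ : ∃ x : ℝ, x = |(1 - γ * R * Tinf) * ε / 2| + |3 * γ * R * Tinf + 1| := ⟨_, rfl⟩
  obtain ⟨M4, hM4⟩ : ∃ x : ℝ, x = |ε * R / (2 * (γ - 1) * Tinf)| + |γ * R / ((γ - 1) * Tinf)| := ⟨_, rfl⟩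
  obtain ⟨M5, hM5⟩ : ∃ x : ℝ, x = |2 * ε * R| := ⟨_, rfl⟩
  have hΘ0 : (0:ℝ) ≤ Θ := by linarith
  have hΘ3 : (1:ℝ) ≤ Θ ^ 3 := by
    have := pow_le_pow_left₀ (zero_le_one) hΘ 3
    simpa using this
  have hΘ3n : (0:ℝ) ≤ Θ ^ 3 := by linarith
  obtain ⟨C1, hC1⟩ : ∃ x : ℝ, x = M1 * Θ ^ 3 := ⟨_, rfl⟩
  obtain ⟨C2, hC2⟩ : ∃ x : ℝ, x = M2 * Θ ^ 3 := ⟨_, rfl⟩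
  obtain ⟨C3, hC3⟩ : ∃ x : ℝ, x = M3 * Θ ^ 3 := ⟨_, rfl⟩
  obtain ⟨C4, hC4⟩ : ∃ x : ℝ, x = M4 * Θ ^ 3 := ⟨_, rfl⟩
  obtain ⟨C5, hC5⟩ : ∃ x : ℝ, x = M5 * Θ ^ 3 := ⟨_, rfl⟩
  have hC1n : 0 ≤ C1 := by rw [hC1, hM1]; exact mul_nonneg (by positivity) hΘ3n
  have hC2n : 0 ≤ C2 := by rw [hC2, hM2]; exact mul_nonneg (by positivity) hΘ3n
  have hC3n : 0 ≤ C3 := by rw [hC3, hM3]; exact mul_nonneg (by positivity) hΘ3n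
  have hC4n : 0 ≤ C4 := by rw [hC4, hM4]; exact mul_nonneg (by positivity) hΘ3n
  have hC5n : 0 ≤ C5 := by rw [hC5, hM5]; exact mul_nonneg (by positivity) hΘ3n
  -- abbreviations for the base values
  have hPpos : 0 < ε * R / (2 * (γ - 1) * Tinf) := by
    apply div_pos (mul_pos hε hR)
    have : 0 < (2 * (γ - 1)) * Tinf := mul_pos (by linarith) hT
    linarith [this]
  have ha1pos : 0 < ε / 2 * (R * Tinf) := by positivity
  have ha3pos : 0 < ε / 2 * γ * (R * Tinf) := by
    apply mul_pos (mul_pos (by positivity) (by linarith)) hA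
  -- the pieces of δ
  obtain ⟨d1, hd1⟩ : ∃ x : ℝ, x = (ε * (R * Tinf) / 4) / (C1 + 1) := ⟨_, rfl⟩
  obtain ⟨d3, hd3⟩ : ∃ x : ℝ, x = (ε * γ * (R * Tinf) / 4) / (C3 + 1) := ⟨_, rfl⟩
  obtain ⟨d4, hd4⟩ : ∃ x : ℝ, x = (ε * R / (2 * (γ - 1) * Tinf) / 2) / (C4 + 1) := ⟨_, rfl⟩
  obtain ⟨d21, hd21⟩ : ∃ x : ℝ, x = 1 / (C2 + 1) := ⟨_, rfl⟩
  obtain ⟨Y1, hY1⟩ : ∃ x : ℝ, x = C2 * (2 * ε * (R * Tinf) + 1)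
      + 4 * (C1 * (ε / 2 * γ * (R * Tinf)) + C3 * (ε / 2 * (R * Tinf))) := ⟨_, rfl⟩
  obtain ⟨d22, hd22⟩ : ∃ x : ℝ, x = (ε ^ 2 * (R * Tinf) ^ 2 * (γ - 1) / 2) / (Y1 + 1) := ⟨_, rfl⟩
  obtain ⟨d51, hd51⟩ : ∃ x : ℝ, x = 1 / (C5 + 1) := ⟨_, rfl⟩
  obtain ⟨Y2, hY2⟩ : ∃ x : ℝ, x = C5 * (2 * ε * R + 1)
      + 4 * (C3 * (ε * R / (2 * (γ - 1) * Tinf)) + C4 * (ε / 2 * γ * (R * Tinf))) := ⟨_, rfl⟩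
  obtain ⟨d52, hd52⟩ : ∃ x : ℝ, x = (ε ^ 2 * R ^ 2 / (γ - 1) / 2) / (Y2 + 1) := ⟨_, rfl⟩
  have hY1n : 0 ≤ Y1 := by
    rw [hY1]
    apply add_nonneg
    · exact mul_nonneg hC2n (by positivity)
    · have h1 := mul_nonneg hC1n ha3pos.le
      have h2 := mul_nonneg hC3n ha1pos.le
      linarith
  have hY2n : 0 ≤ Y2 := by
    rw [hY2]
    apply add_nonneg
    · exact mul_nonneg hC5n (by positivity)
    · have h1 := mul_nonneg hC3n hPpos.le
      have h2 := mul_nonneg hC4n ha3pos.le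
      linarith
  have hd1p : 0 < d1 := by rw [hd1]; exact div_pos (by positivity) (by linarith)
  have hd3p : 0 < d3 := by
    rw [hd3]
    apply div_pos _ (by linarith)
    have : 0 < ε * γ * (R * Tinf) := mul_pos (mul_pos hε (by linarith)) hA
    linarith
  have hd4p : 0 < d4 := by rw [hd4]; exact div_pos (by linarith) (by linarith)
  have hd21p : 0 < d21 := by rw [hd21]; exact div_pos one_pos (by linarith)
  have hd22p : 0 < d22 := by
    rw [hd22]
    apply div_pos _ (by linarith)
    have : 0 < ε ^ 2 * (R * Tinf) ^ 2 * (γ - 1) := by positivity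
    linarith
  have hd51p : 0 < d51 := by rw [hd51]; exact div_pos one_pos (by linarith)
  have hd52p : 0 < d52 := by
    rw [hd52]
    apply div_pos _ (by linarith)
    have : 0 < ε ^ 2 * R ^ 2 / (γ - 1) := by positivity
    linarith
  obtain ⟨m, hm⟩ : ∃ x : ℝ, x = min (min (min d1 d3) (min d4 d21)) (min (min d22 d51) d52) := ⟨_, rfl⟩
  have hmp : 0 < m := by
    simp only [hm, lt_min_iff]
    exact ⟨⟨⟨hd1p, hd3p⟩, hd4p, hd21p⟩, ⟨hd22p, hd51p⟩, hd52p⟩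
  refine ⟨Γsq * m, mul_pos hΓpos hmp, ?_⟩
  intro S B hS1 hSΘ hB hBδ b q₁ q₂ q₃ q₄ q₅ hb hq1 hq2 hq3 hq4 hq5
  have hbnn : 0 ≤ b := by
    rw [hb]
    exact mul_nonneg (by positivity) (inv_nonneg.2 hΓpos.le)
  have hbm : b ≤ m := by
    rw [hb]
    calc (1 / B ^ 2) * Γsq⁻¹ ≤ (Γsq * m) * Γsq⁻¹ :=
          mul_le_mul_of_nonneg_right hBδ (inv_nonneg.2 hΓpos.le)
      _ = m := by field_simp
  rw [hm] at hbm
  -- extract the individual smallness conditions on b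
  have hb1 : b * (C1 + 1) ≤ ε * (R * Tinf) / 4 := by
    have h : b ≤ d1 := hbm.trans (le_trans (min_le_left _ _) (le_trans (min_le_left _ _) (min_le_left _ _)))
    rwa [hd1, le_div_iff₀ (by linarith)] at h
  have hb3 : b * (C3 + 1) ≤ ε * γ * (R * Tinf) / 4 := by
    have h : b ≤ d3 := hbm.trans ((min_le_left _ _).trans ((min_le_left _ _).trans (min_le_right _ _)))
    rwa [hd3, le_div_iff₀ (by linarith)] at h
  have hb4 : b * (C4 + 1) ≤ ε * R / (2 * (γ - 1) * Tinf) / 2 := by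
    have h : b ≤ d4 := hbm.trans ((min_le_left _ _).trans ((min_le_right _ _).trans (min_le_left _ _)))
    rwa [hd4, le_div_iff₀ (by linarith)] at h
  have hb21 : b * (C2 + 1) ≤ 1 := by
    have h : b ≤ d21 := hbm.trans ((min_le_left _ _).trans ((min_le_right _ _).trans (min_le_right _ _)))
    rwa [hd21, le_div_iff₀ (by linarith)] at h
  have hb22 : b * (Y1 + 1) ≤ ε ^ 2 * (R * Tinf) ^ 2 * (γ - 1) / 2 := by
    have h : b ≤ d22 := hbm.trans ((min_le_right _ _).trans ((min_le_left _ _).trans (min_le_left _ _)))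
    rwa [hd22, le_div_iff₀ (by linarith)] at h
  have hb51 : b * (C5 + 1) ≤ 1 := by
    have h : b ≤ d51 := hbm.trans ((min_le_right _ _).trans ((min_le_left _ _).trans (min_le_right _ _)))
    rwa [hd51, le_div_iff₀ (by linarith)] at h
  have hb52 : b * (Y2 + 1) ≤ ε ^ 2 * R ^ 2 / (γ - 1) / 2 := by
    have h : b ≤ d52 := hbm.trans ((min_le_right _ _).trans (min_le_right _ _))
    rwa [hd52, le_div_iff₀ (by linarith)] at h
  have hbC1 : b * C1 ≤ ε * (R * Tinf) / 4 := by linarith only [hb1, hbnn]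
  have hbC3 : b * C3 ≤ ε * γ * (R * Tinf) / 4 := by linarith only [hb3, hbnn]
  have hbC4 : b * C4 ≤ ε * R / (2 * (γ - 1) * Tinf) / 2 := by linarith only [hb4, hbnn]
  have hbC2 : b * C2 ≤ 1 := by linarith only [hb21, hbnn]
  have hbC5 : b * C5 ≤ 1 := by linarith only [hb51, hbnn]
  have hbC1n : 0 ≤ b * C1 := mul_nonneg hbnn hC1n
  have hbC2n : 0 ≤ b * C2 := mul_nonneg hbnn hC2n
  have hbC3n : 0 ≤ b * C3 := mul_nonneg hbnn hC3n
  have hbC4n : 0 ≤ b * C4 := mul_nonneg hbnn hC4n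
  have hbC5n : 0 ≤ b * C5 := mul_nonneg hbnn hC5n
  -- bounds on powers of S
  have hS0 : (0:ℝ) ≤ S := by linarith
  have hS2n : (0:ℝ) ≤ S ^ 2 := by positivity
  have hS3n : (0:ℝ) ≤ S ^ 3 := by positivity
  have hS2 : S ^ 2 ≤ Θ ^ 3 := by
    have h1 := pow_le_pow_left₀ hS0 hSΘ 2
    have h2 : 0 ≤ Θ ^ 2 * (Θ - 1) := mul_nonneg (sq_nonneg Θ) (by linarith)
    linarith only [h1, h2]
  have hS3 : S ^ 3 ≤ Θ ^ 3 := pow_le_pow_left₀ hS0 hSΘ 3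
  -- bounds on the perturbation terms
  have hE1 : |((1 - R * Tinf) * ε / 2) * S ^ 2 + (γ * R * Tinf - 1) * S ^ 3
      - Γsq / 2 * (ε * (ε - 1) * (ε - 2))| ≤ C1 := by
    rw [hC1, hM1]
    have t1 := absmul18 ((1 - R * Tinf) * ε / 2) (S ^ 2) (Θ ^ 3) hS2n hS2
    have t2 := absmul18 (γ * R * Tinf - 1) (S ^ 3) (Θ ^ 3) hS3n hS3
    have t3 : |Γsq / 2 * (ε * (ε - 1) * (ε - 2))|
        ≤ |Γsq / 2 * (ε * (ε - 1) * (ε - 2))| * Θ ^ 3 :=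
      le_mul_of_one_le_right (abs_nonneg _) hΘ3
    calc |((1 - R * Tinf) * ε / 2) * S ^ 2 + (γ * R * Tinf - 1) * S ^ 3
            - Γsq / 2 * (ε * (ε - 1) * (ε - 2))|
        ≤ |((1 - R * Tinf) * ε / 2) * S ^ 2 + (γ * R * Tinf - 1) * S ^ 3|
          + |Γsq / 2 * (ε * (ε - 1) * (ε - 2))| := abs_sub _ _
      _ ≤ |((1 - R * Tinf) * ε / 2) * S ^ 2| + |(γ * R * Tinf - 1) * S ^ 3|
          + |Γsq / 2 * (ε * (ε - 1) * (ε - 2))| := by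
            have := abs_add_le (((1 - R * Tinf) * ε / 2) * S ^ 2) ((γ * R * Tinf - 1) * S ^ 3)
            linarith
      _ ≤ (|(1 - R * Tinf) * ε / 2| + |γ * R * Tinf - 1|
          + |Γsq / 2 * (ε * (ε - 1) * (ε - 2))|) * Θ ^ 3 := by linarith only [t1, t2, t3]
  have hE2 : |2 * ε * R * Tinf * S ^ 2 + 2 * (1 - γ * R * Tinf) * S ^ 3| ≤ C2 := by
    rw [hC2, hM2]
    have t1 := absmul18 (2 * ε * R * Tinf) (S ^ 2) (Θ ^ 3) hS2n hS2
    have t2 := absmul18 (2 * (1 - γ * R * Tinf)) (S ^ 3) (Θ ^ 3) hS3n hS3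
    calc |2 * ε * R * Tinf * S ^ 2 + 2 * (1 - γ * R * Tinf) * S ^ 3|
        ≤ |2 * ε * R * Tinf * S ^ 2| + |2 * (1 - γ * R * Tinf) * S ^ 3| := abs_add_le _ _
      _ ≤ (|2 * ε * R * Tinf| + |2 * (1 - γ * R * Tinf)|) * Θ ^ 3 := by
          linarith only [t1, t2]
  have hE3 : |((1 - γ * R * Tinf) * ε / 2) * S ^ 2 + (3 * γ * R * Tinf + 1) * S ^ 3| ≤ C3 := by
    rw [hC3, hM3]
    have t1 := absmul18 ((1 - γ * R * Tinf) * ε / 2) (S ^ 2) (Θ ^ 3) hS2n hS2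
    have t2 := absmul18 (3 * γ * R * Tinf + 1) (S ^ 3) (Θ ^ 3) hS3n hS3
    calc |((1 - γ * R * Tinf) * ε / 2) * S ^ 2 + (3 * γ * R * Tinf + 1) * S ^ 3|
        ≤ |((1 - γ * R * Tinf) * ε / 2) * S ^ 2| + |(3 * γ * R * Tinf + 1) * S ^ 3| := abs_add_le _ _
      _ ≤ (|(1 - γ * R * Tinf) * ε / 2| + |3 * γ * R * Tinf + 1|) * Θ ^ 3 := by
          linarith only [t1, t2]
  have hE4 : |-(ε * R / (2 * (γ - 1) * Tinf)) * S ^ 2 + (γ * R / ((γ - 1) * Tinf)) * S ^ 3| ≤ C4 := by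
    rw [hC4, hM4]
    have t1 := absmul18 (ε * R / (2 * (γ - 1) * Tinf)) (S ^ 2) (Θ ^ 3) hS2n hS2
    have t2 := absmul18 (γ * R / ((γ - 1) * Tinf)) (S ^ 3) (Θ ^ 3) hS3n hS3
    calc |-(ε * R / (2 * (γ - 1) * Tinf)) * S ^ 2 + (γ * R / ((γ - 1) * Tinf)) * S ^ 3|
        ≤ |-(ε * R / (2 * (γ - 1) * Tinf)) * S ^ 2| + |(γ * R / ((γ - 1) * Tinf)) * S ^ 3| :=
          abs_add_le _ _
      _ ≤ (|ε * R / (2 * (γ - 1) * Tinf)| + |γ * R / ((γ - 1) * Tinf)|) * Θ ^ 3 := by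
          rw [neg_mul, abs_neg]
          linarith only [t1, t2]
  have hE5 : |2 * ε * R * S ^ 2| ≤ C5 := by
    rw [hC5, hM5]
    exact absmul18 (2 * ε * R) (S ^ 2) (Θ ^ 3) hS2n hS2
  obtain ⟨hE1lo, hE1hi⟩ := abs_le.mp hE1
  obtain ⟨hE2lo, hE2hi⟩ := abs_le.mp hE2
  obtain ⟨hE3lo, hE3hi⟩ := abs_le.mp hE3
  obtain ⟨hE4lo, hE4hi⟩ := abs_le.mp hE4
  obtain ⟨hE5lo, hE5hi⟩ := abs_le.mp hE5
  have hposA : 0 < ε * (R * Tinf) := mul_pos hε hA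
  have hposgA : 0 < ε * γ * (R * Tinf) := mul_pos (mul_pos hε (by linarith)) hA
  -- two-sided bounds on the q's
  have hq1lo : (ε / 2) * R * Tinf - b * C1 ≤ q₁ := by
    rw [hq1]
    linarith only [mul_le_mul_of_nonneg_left hE1lo hbnn]
  have hq3lo : (ε / 2) * γ * R * Tinf - b * C3 ≤ q₃ := by
    rw [hq3]
    linarith only [mul_le_mul_of_nonneg_left hE3lo hbnn]
  have hq4lo : ε * R / (2 * (γ - 1) * Tinf) - b * C4 ≤ q₄ := by
    rw [hq4]
    linarith only [mul_le_mul_of_nonneg_left hE4lo hbnn]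
  have hq2lo : -(ε * R * Tinf) - b * C2 ≤ q₂ := by
    rw [hq2]
    linarith only [mul_le_mul_of_nonneg_left hE2lo hbnn]
  have hq2hi : q₂ ≤ -(ε * R * Tinf) + b * C2 := by
    rw [hq2]
    linarith only [mul_le_mul_of_nonneg_left hE2hi hbnn]
  have hq5lo : -(ε * R) - b * C5 ≤ q₅ := by
    rw [hq5]
    linarith only [mul_le_mul_of_nonneg_left hE5lo hbnn]
  have hq5hi : q₅ ≤ -(ε * R) + b * C5 := by
    rw [hq5]
    linarith only [mul_le_mul_of_nonneg_left hE5hi hbnn]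
  -- positivity of q₁, q₃, q₄
  have hq1pos : 0 < q₁ := by linarith only [hq1lo, hbC1, hposA]
  have hq3pos : 0 < q₃ := by linarith only [hq3lo, hbC3, hposgA]
  have hq4pos : 0 < q₄ := by linarith only [hq4lo, hbC4, hPpos]
  refine ⟨hq1pos, hq3pos, hq4pos, ?_, ?_⟩
  · -- first discriminant
    rw [hY1] at hb22
    have hq2sq : q₂ ^ 2 ≤ (ε * R * Tinf + b * C2) ^ 2 :=
      sq_le_sq' (by linarith only [hq2lo]) (by linarith only [hq2hi, hposA])
    have hlo3 : 0 ≤ (ε / 2) * γ * R * Tinf - b * C3 := by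
      linarith only [hbC3, hposgA]
    have hprod : ((ε / 2) * R * Tinf - b * C1) * ((ε / 2) * γ * R * Tinf - b * C3)
        ≤ q₁ * q₃ := mul_le_mul hq1lo hq3lo hlo3 hq1pos.le
    have hsq1 : b * C2 * (b * C2) ≤ b * C2 * 1 :=
      mul_le_mul_of_nonneg_left hbC2 hbC2n
    have hpr13 : 0 ≤ (b * C1) * (b * C3) := mul_nonneg hbC1n hbC3n
    have hposd : 0 < ε ^ 2 * (R * Tinf) ^ 2 * (γ - 1) :=
      mul_pos (mul_pos (pow_pos hε 2) (pow_pos hA 2)) hg1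
    linarith only [hq2sq, hprod, hb22, hsq1, hpr13, hbnn, hposd]
  · -- second discriminant
    rw [hY2] at hb52
    have key : 4 * ((ε / 2) * γ * R * Tinf) * (ε * R / (2 * (γ - 1) * Tinf))
        = ε ^ 2 * R ^ 2 + ε ^ 2 * R ^ 2 / (γ - 1) := by
      field_simp
      ring
    have hposR : 0 < ε * R := mul_pos hε hR
    have hq5sq : q₅ ^ 2 ≤ (ε * R + b * C5) ^ 2 :=
      sq_le_sq' (by linarith only [hq5lo]) (by linarith only [hq5hi, hposR])
    have hlo4 : 0 ≤ ε * R / (2 * (γ - 1) * Tinf) - b * C4 := by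
      linarith only [hbC4, hPpos]
    have hprod : ((ε / 2) * γ * R * Tinf - b * C3) * (ε * R / (2 * (γ - 1) * Tinf) - b * C4)
        ≤ q₃ * q₄ := mul_le_mul hq3lo hq4lo hlo4 hq3pos.le
    have hsq5 : b * C5 * (b * C5) ≤ b * C5 * 1 :=
      mul_le_mul_of_nonneg_left hbC5 hbC5n
    have hpr34 : 0 ≤ (b * C3) * (b * C4) := mul_nonneg hbC3n hbC4n
    have hpos2 : 0 < ε ^ 2 * R ^ 2 / (γ - 1) := by positivity
    linarith only [hq5sq, hprod, hb52, key, hsq5, hpr34, hbnn, hpos2]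
end
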